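/- Let α be a Frenet curve in S³ with curvature κ and torsion τ such that τ(s) ≠ 0 and κ′(s) ≠ 0 for all s ∈ I. If τ(s)/κ(s) − d/ds [ κ′(s)/(κ(s)²τ(s)) ] = 0 for all s ∈ I, then there exist a unit vector a ∈ ℝ⁴ and σ ∈ (−1,1) with σ ≠ 0 such that ⟨α(s),a⟩ = σ for all s ∈ I; that is, α is contained in a geodesic sphere of S³. -/

import Mathlib

noncomputable section

/-- The standard Euclidean inner product on `ℝ⁴`. -/
def eprod (x y : Fin 4 → ℝ) : ℝ :=
  x 0 * y 0 + x 1 * y 1 + x 2 * y 2 + x 3 * y 3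

/-- A Frenet curve in the round sphere `S³ = {p ∈ ℝ⁴ : ⟨p,p⟩ = 1}`:
a `C⁴` unit-speed curve `α : I → S³` on an open interval `I`, together with a
Frenet frame `T, N, B`, a positive `C²` curvature `κ` and a `C¹` torsion `τ`,
such that `T(s), N(s), B(s), α(s)` is an orthonormal basis of `ℝ⁴` for each
`s ∈ I` and the Frenet equations `T′ = κN − α`, `N′ = −κT + τB`, `B′ = −τN`
hold on `I`. -/
structure FrenetCurveS3 where
  I : Set ℝ
  hopen : IsOpen I
  hconn : I.OrdConnected
  α : ℝ → Fin 4 → ℝ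
  T : ℝ → Fin 4 → ℝ
  N : ℝ → Fin 4 → ℝ
  B : ℝ → Fin 4 → ℝ
  κ : ℝ → ℝ
  τ : ℝ → ℝ
  hα_smooth : ContDiffOn ℝ 4 α I
  hκ_smooth : ContDiffOn ℝ 2 κ I
  hτ_smooth : ContDiffOn ℝ 1 τ I
  hκ_pos : ∀ s ∈ I, 0 < κ s
  h_sphere : ∀ s ∈ I, eprod (α s) (α s) = 1
  hT : ∀ s ∈ I, HasDerivAt α (T s) s
  hTT : ∀ s ∈ I, eprod (T s) (T s) = 1
  hNN : ∀ s ∈ I, eprod (N s) (N s) = 1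
  hBB : ∀ s ∈ I, eprod (B s) (B s) = 1
  hTN : ∀ s ∈ I, eprod (T s) (N s) = 0
  hTB : ∀ s ∈ I, eprod (T s) (B s) = 0
  hNB : ∀ s ∈ I, eprod (N s) (B s) = 0
  hTα : ∀ s ∈ I, eprod (T s) (α s) = 0
  hNα : ∀ s ∈ I, eprod (N s) (α s) = 0
  hBα : ∀ s ∈ I, eprod (B s) (α s) = 0
  hbasis : ∀ s ∈ I, ∀ v : Fin 4 → ℝ,
    eprod v v =
      eprod v (T s) ^ 2 + eprod v (N s) ^ 2 + eprod v (B s) ^ 2 + eprod v (α s) ^ 2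
  hFrenetT : ∀ s ∈ I, HasDerivAt T (κ s • N s - α s) s
  hFrenetN : ∀ s ∈ I, HasDerivAt N ((-κ s) • T s + τ s • B s) s
  hFrenetB : ∀ s ∈ I, HasDerivAt B ((-τ s) • N s) s

lemma eprod_comm (x y : Fin 4 → ℝ) : eprod x y = eprod y x := by
  simp only [eprod]; ring

lemma eprod_combo_self (k g : ℝ) (n b a : Fin 4 → ℝ) :
    eprod (k • n - g • b + a) (k • n - g • b + a)
      = k ^ 2 * eprod n n + g ^ 2 * eprod b b + eprod a a
        - 2 * k * g * eprod n b + 2 * k * eprod n a - 2 * g * eprod b a := by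
  simp only [eprod, Pi.add_apply, Pi.sub_apply, Pi.smul_apply, smul_eq_mul]; ring

lemma eprod_combo_right (k g : ℝ) (n b a x : Fin 4 → ℝ) :
    eprod x (k • n - g • b + a)
      = k * eprod x n - g * eprod x b + eprod x a := by
  simp only [eprod, Pi.add_apply, Pi.sub_apply, Pi.smul_apply, smul_eq_mul]; ring

lemma eprod_smul_right (r : ℝ) (x y : Fin 4 → ℝ) :
    eprod x (r • y) = r * eprod x y := by
  simp only [eprod, Pi.smul_apply, smul_eq_mul]; ring

/-- If a Frenet curve `α` in `S³` with `τ ≠ 0` and `κ′ ≠ 0` satisfies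
`τ/κ − (κ′/(κ²τ))′ = 0` on `I`, then `α` is contained in a geodesic sphere of
`S³`: there are a unit vector `a ∈ ℝ⁴` and `σ ∈ (−1,1)`, `σ ≠ 0`, with
`⟨α(s),a⟩ = σ` for all `s ∈ I`. -/
theorem contained_in_geodesic_sphere_of_fourth_order_equation_S3
    (F : FrenetCurveS3)
    (hτ : ∀ s ∈ F.I, F.τ s ≠ 0) (hκ' : ∀ s ∈ F.I, deriv F.κ s ≠ 0)
    (heq : ∀ s ∈ F.I,
      F.τ s / F.κ s
        - deriv (fun u => deriv F.κ u / (F.κ u ^ 2 * F.τ u)) s = 0) :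
    ∃ (a : Fin 4 → ℝ) (σ : ℝ), eprod a a = 1 ∧ σ ∈ Set.Ioo (-1 : ℝ) 1 ∧
      σ ≠ 0 ∧ ∀ s ∈ F.I, eprod (F.α s) a = σ := by
  rcases Set.eq_empty_or_nonempty F.I with hIe | ⟨s₀, hs₀⟩
  · exact ⟨fun i => if i = 0 then 1 else 0, 1/2, by simp [eprod], by norm_num,
      by norm_num, by simp [hIe]⟩
  set f : ℝ → ℝ := fun u => deriv F.κ u / (F.κ u ^ 2 * F.τ u) with hf_def
  set c : ℝ → Fin 4 → ℝ := fun u => (F.κ u)⁻¹ • F.N u - f u • F.B u + F.α u with hc_def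
  have hI := F.hopen
  -- derivative facts at each point of I
  have hκne : ∀ s ∈ F.I, F.κ s ≠ 0 := fun s hs => ne_of_gt (F.hκ_pos s hs)
  have hκd : ∀ s ∈ F.I, HasDerivAt F.κ (deriv F.κ s) s := by
    intro s hs
    exact ((F.hκ_smooth.contDiffAt (hI.mem_nhds hs)).differentiableAt
      (by norm_num)).hasDerivAt
  have hκ2 : ContDiffOn ℝ 1 (deriv F.κ) F.I := by
    have := F.hκ_smooth.deriv_of_isOpen hI (m := 1) (by norm_num)
    exact this
  have hfd : ∀ s ∈ F.I, HasDerivAt f (F.τ s / F.κ s) s := by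
    intro s hs
    have h1 : DifferentiableAt ℝ (deriv F.κ) s :=
      (hκ2.contDiffAt (hI.mem_nhds hs)).differentiableAt one_ne_zero
    have h2 : DifferentiableAt ℝ F.κ s :=
      (F.hκ_smooth.contDiffAt (hI.mem_nhds hs)).differentiableAt (by norm_num)
    have h3 : DifferentiableAt ℝ F.τ s :=
      (F.hτ_smooth.contDiffAt (hI.mem_nhds hs)).differentiableAt one_ne_zero
    have hden : F.κ s ^ 2 * F.τ s ≠ 0 :=
      mul_ne_zero (pow_ne_zero 2 (hκne s hs)) (hτ s hs)
    have hdf : DifferentiableAt ℝ f s := h1.div ((h2.pow 2).mul h3) hden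
    have := hdf.hasDerivAt
    have heqs := heq s hs
    have : HasDerivAt f (deriv f s) s := this
    rwa [show deriv f s = F.τ s / F.κ s by
      have : deriv (fun u => deriv F.κ u / (F.κ u ^ 2 * F.τ u)) s = F.τ s / F.κ s := by
        linarith
      simpa [hf_def] using this] at this
  -- c has derivative 0 on I
  have hc0 : ∀ s ∈ F.I, HasDerivAt c 0 s := by
    intro s hs
    have hinv : HasDerivAt (fun u => (F.κ u)⁻¹) (-(deriv F.κ s) / F.κ s ^ 2) s :=
      (hκd s hs).inv (hκne s hs)
    have hder : HasDerivAt c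
        (((F.κ s)⁻¹ • ((-F.κ s) • F.T s + F.τ s • F.B s)
            + (-(deriv F.κ s) / F.κ s ^ 2) • F.N s)
          - (f s • ((-F.τ s) • F.N s) + (F.τ s / F.κ s) • F.B s)
          + F.T s) s :=
      ((hinv.smul (F.hFrenetN s hs)).sub ((hfd s hs).smul (F.hFrenetB s hs))).add
        (F.hT s hs)
    convert hder using 1
    have hκs := hκne s hs
    have hτs := hτ s hs
    funext i
    simp only [hf_def, Pi.add_apply, Pi.sub_apply, Pi.smul_apply, smul_eq_mul,
      Pi.zero_apply]
    field_simp
    ring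
  -- c is constant on I
  have hconv : Convex ℝ F.I := convex_iff_ordConnected.mpr F.hconn
  have hconst : ∀ s ∈ F.I, c s = c s₀ := by
    intro s hs
    have hdiff : DifferentiableOn ℝ c F.I := fun x hx =>
      ((hc0 x hx).differentiableAt).differentiableWithinAt
    refine hconv.is_const_of_fderivWithin_eq_zero hdiff (fun x hx => ?_) hs hs₀
    have h1 : fderiv ℝ c x = 0 := by
      have := ((hc0 x hx).hasFDerivAt).fderiv
      rw [this]
      ext v
      simp
    rw [fderivWithin_of_isOpen hI hx, h1]
  -- orthonormality values at s₀
  have hNN := F.hNN s₀ hs₀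
  have hBB := F.hBB s₀ hs₀
  have hαα := F.h_sphere s₀ hs₀
  have hNB := F.hNB s₀ hs₀
  have hNα := F.hNα s₀ hs₀
  have hBα := F.hBα s₀ hs₀
  set K : ℝ := eprod (c s₀) (c s₀) with hK_def
  have hK : K = (F.κ s₀)⁻¹ ^ 2 + f s₀ ^ 2 + 1 := by
    rw [hK_def, hc_def]
    rw [eprod_combo_self]
    rw [hNN, hBB, hαα, hNB, hNα, hBα]; ring
  have hκ0 := F.hκ_pos s₀ hs₀
  have hK1 : 1 < K := by
    rw [hK]
    have h1 : 0 < (F.κ s₀)⁻¹ ^ 2 := by positivity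
    nlinarith [sq_nonneg (f s₀)]
  set r : ℝ := Real.sqrt K with hr_def
  have hr1 : 1 < r := by
    rw [hr_def]
    have := Real.sqrt_lt_sqrt (by norm_num : (0:ℝ) ≤ 1) hK1
    simpa using this
  have hr0 : 0 < r := lt_trans one_pos hr1
  have hr2 : r ^ 2 = K := Real.sq_sqrt (by linarith : (0:ℝ) ≤ K)
  refine ⟨r⁻¹ • c s₀, r⁻¹, ?_, ?_, ?_, ?_⟩
  · rw [show eprod (r⁻¹ • c s₀) (r⁻¹ • c s₀) = r⁻¹ * (r⁻¹ * K) by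
      rw [eprod_smul_right, eprod_comm, eprod_smul_right, eprod_comm, ← hK_def]]
    field_simp
    nlinarith
  · constructor
    · have : 0 < r⁻¹ := inv_pos.mpr hr0
      linarith
    · rw [inv_lt_one_iff₀]; right; exact hr1
  · exact ne_of_gt (inv_pos.mpr hr0)
  · intro s hs
    rw [eprod_smul_right, ← hconst s hs, hc_def]
    rw [eprod_combo_right]
    rw [eprod_comm (F.α s) (F.N s), F.hNα s hs,
      eprod_comm (F.α s) (F.B s), F.hBα s hs, F.h_sphere s hs]
    ring
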